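/- The intersection of a countable collection {S_i} of α_i-winning sets in a complete metric space, with inf_i α_i = α_0 > 0, is an α_0-winning set. -/

import Mathlib

open Metric

/-- Alice has a winning strategy in Schmidt's `(α, β)`-game with target set `S` on a metric
space `X`.  Bob starts with a closed ball of radius `ρ` centred at `x₀`; thereafter Bob's `n`-th
ball has radius `ρ(αβ)ⁿ` and Alice's `n`-th ball has radius `ρα(αβ)ⁿ⁻¹`.  A strategy for Alice
assigns to every (relevant) finite history of Bob's moves her next centre; it must always
produce a ball contained in Bob's previous ball, and whenever Bob plays legally forever, every
point of the resulting nested intersection belongs to `S`. -/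
def IsAlphaBetaWinning {X : Type*} [MetricSpace X] (α β : ℝ) (S : Set X) : Prop :=
  ∀ ρ : ℝ, 0 < ρ → ∀ x₀ : X,
    ∃ a : (ℕ → X) → ℕ → X,
      (∀ bob bob' : ℕ → X, ∀ n : ℕ, (∀ i ≤ n, bob i = bob' i) → a bob n = a bob' n) ∧
      ∀ bob : ℕ → X, bob 0 = x₀ →
        (∀ n : ℕ, closedBall (bob (n + 1)) (ρ * (α * β) ^ (n + 1)) ⊆
            closedBall (a bob n) (ρ * α * (α * β) ^ n)) →
        (∀ n : ℕ, closedBall (a bob n) (ρ * α * (α * β) ^ n) ⊆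
            closedBall (bob n) (ρ * (α * β) ^ n)) ∧
          ∀ z : X, (∀ n : ℕ, z ∈ closedBall (bob n) (ρ * (α * β) ^ n)) → z ∈ S

/-- `S` is `α`-winning for Schmidt's game: Alice wins the `(α, β)`-game for every `β ∈ (0,1)`. -/
def IsAlphaWinning {X : Type*} [MetricSpace X] (α : ℝ) (S : Set X) : Prop :=
  0 < α ∧ α < 1 ∧ ∀ β : ℝ, 0 < β → β < 1 → IsAlphaBetaWinning α β S

/-! Lowering `α` keeps a set winning (Alice plays the same centres; her balls only shrink), so
every `Sᵢ` is `α₀`-winning with `α₀ = ⨅ i, αᵢ`. Write the times of the `(α₀, β)`-game as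
`2 ^ i - 1 + j * 2 ^ (i + 1)`: along row `i` the radii form an
`(α₀, (α₀β) ^ 2 ^ (i + 1) / α₀)`-game, in which Alice follows her strategy for `Sᵢ`.
Between consecutive times of a row the balls are nested, so Bob's moves are legal in every
subgame and the limit point lies in every `Sᵢ`. Legality of Alice's moves is proved by strong
induction on time; since a strategy is only guaranteed legal against infinite legal plays,
finite histories are first prolonged. -/

section

variable {X : Type*}

lemma two_pow_mul_odd_injective :
    Function.Injective fun p : ℕ × ℕ => 2 ^ p.1 * (2 * p.2 + 1) := by
  rintro ⟨i, j⟩ ⟨i', j'⟩ h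
  simp only at h
  have hval : ∀ i j : ℕ, padicValNat 2 (2 ^ i * (2 * j + 1)) = i := fun i j => by
    rw [padicValNat.mul (by positivity) (by omega), padicValNat.prime_pow,
      padicValNat.eq_zero_of_not_dvd (by omega), add_zero]
  obtain rfl : i = i' := by rw [← hval i j, h, hval]
  have := Nat.eq_of_mul_eq_mul_left (by positivity) h
  simp only [Prod.mk.injEq, true_and]
  omega

/-- Its rows `j ↦ dyadicEquiv (i, j)` are arithmetic progressions, so along a row a geometric
game is again geometric. -/
noncomputable def dyadicEquiv : ℕ × ℕ ≃ ℕ :=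
  Equiv.ofBijective (fun p => 2 ^ p.1 * (2 * p.2 + 1) - 1) <| by
    refine ⟨fun p q h => two_pow_mul_odd_injective ?_, fun n => ?_⟩
    · have : 0 < 2 ^ p.1 * (2 * p.2 + 1) := by positivity
      have : 0 < 2 ^ q.1 * (2 * q.2 + 1) := by positivity
      simp only at h ⊢
      omega
    · obtain ⟨i, m, ⟨j, rfl⟩, hn⟩ := Nat.exists_eq_two_pow_mul_odd (Nat.succ_ne_zero n)
      exact ⟨(i, j), by simp only; omega⟩

lemma dyadicEquiv_apply (i j : ℕ) : dyadicEquiv (i, j) = 2 ^ i - 1 + j * 2 ^ (i + 1) := by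
  have := Nat.one_le_two_pow (n := i)
  change 2 ^ i * (2 * j + 1) - 1 = _
  rw [pow_succ]
  have : 2 ^ i * (2 * j + 1) = 2 ^ i + j * (2 ^ i * 2) := by ring
  omega

lemma strictMono_dyadicEquiv (i : ℕ) : StrictMono fun j => dyadicEquiv (i, j) := by
  intro j j' h
  simp only [dyadicEquiv_apply]
  have := Nat.mul_lt_mul_of_pos_right h (Nat.two_pow_pos (i + 1))
  omega

def IsNonanticipating {Y : Type*} (F : (ℕ → X) → ℕ → Y) : Prop :=
  ∀ b b' : ℕ → X, ∀ n, (∀ i ≤ n, b i = b' i) → F b n = F b' n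

/-- Stage `t` has fixed the terms of index at most `k + t` for good. -/
def prolongAux (F : (ℕ → X) → ℕ → X) (b : ℕ → X) (k : ℕ) : ℕ → ℕ → X
  | 0 => b
  | t + 1 => Function.update (prolongAux F b k t) (k + t + 1) (F (prolongAux F b k t) (k + t))

def prolong (F : (ℕ → X) → ℕ → X) (b : ℕ → X) (k : ℕ) (m : ℕ) : X :=
  prolongAux F b k m m

section prolong

variable (F : (ℕ → X) → ℕ → X) (b : ℕ → X) (k : ℕ)

lemma prolongAux_eq_of_le {s t m : ℕ} (hm : m ≤ k + s) (hst : s ≤ t) :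
    prolongAux F b k t m = prolongAux F b k s m := by
  induction t, hst using Nat.le_induction with
  | base => rfl
  | succ t hst ih => rw [prolongAux, Function.update_of_ne (by omega), ih]

lemma prolong_of_le {j : ℕ} (hj : j ≤ k) : prolong F b k j = b j :=
  prolongAux_eq_of_le F b k (s := 0) (by omega) (Nat.zero_le j)

lemma prolongAux_eq_prolong {t m : ℕ} (hm : m ≤ k + t) :
    prolongAux F b k t m = prolong F b k m := by
  rcases le_total m t with h | h
  · exact prolongAux_eq_of_le F b k (Nat.le_add_left m k) h
  · exact (prolongAux_eq_of_le F b k hm h).symm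

lemma prolong_succ (hF : IsNonanticipating F) {j : ℕ} (hj : k ≤ j) :
    prolong F b k (j + 1) = F (prolong F b k) j := by
  obtain ⟨t, rfl⟩ := Nat.exists_eq_add_of_le hj
  calc prolong F b k (k + t + 1)
      = prolongAux F b k (t + 1) (k + t + 1) := prolongAux_eq_of_le F b k le_rfl (by omega)
    _ = F (prolongAux F b k t) (k + t) := Function.update_self ..
    _ = F (prolong F b k) (k + t) := hF _ _ _ fun i hi => prolongAux_eq_prolong F b k hi

end prolong

lemma subset_of_interlaced {α : Type*} {A B : ℕ → Set α} (hBA : ∀ n, B (n + 1) ⊆ A n)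
    {m M : ℕ} (hAB : ∀ n, m < n → n < M → A n ⊆ B n) (hmM : m < M) : B M ⊆ A m := by
  induction M, hmM using Nat.le_induction with
  | base => exact hBA m
  | succ M hmM ih =>
    exact (hBA M).trans <| (hAB M hmM M.lt_succ_self).trans <|
      ih fun n h₁ h₂ => hAB n h₁ (h₂.trans M.lt_succ_self)

section interleave

variable (e : ℕ × ℕ ≃ ℕ) (A : ℕ → X → (ℕ → X) → ℕ → X)

/-- Alice answers at time `e (i, j)` with the `j`-th move of her `i`-th strategy, played
against Bob's subsequence `j ↦ bob (e (i, j))`. -/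
def interleave (bob : ℕ → X) (n : ℕ) : X :=
  A (e.symm n).1 (bob (e ((e.symm n).1, 0))) (fun j => bob (e ((e.symm n).1, j))) (e.symm n).2

lemma interleave_apply (bob : ℕ → X) (i j : ℕ) :
    interleave e A bob (e (i, j)) = A i (bob (e (i, 0))) (fun j => bob (e (i, j))) j := by
  simp only [interleave, Equiv.symm_apply_apply]

variable {e A}

lemma isNonanticipating_interleave (he : ∀ i, StrictMono fun j => e (i, j))
    (hA : ∀ i x, IsNonanticipating (A i x)) : IsNonanticipating (interleave e A) := by
  intro b b' n hbb'
  obtain ⟨⟨i, k⟩, rfl⟩ := e.surjective n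
  rw [interleave_apply, interleave_apply, hbb' _ ((he i).monotone k.zero_le)]
  exact hA i _ _ _ k fun j hj => hbb' _ ((he i).monotone hj)

end interleave

variable [MetricSpace X]

def IsWinningStrategy (r s : ℕ → ℝ) (x₀ : X) (S : Set X) (a : (ℕ → X) → ℕ → X) : Prop :=
  ∀ bob : ℕ → X, bob 0 = x₀ →
    (∀ n, closedBall (bob (n + 1)) (r (n + 1)) ⊆ closedBall (a bob n) (s n)) →
    (∀ n, closedBall (a bob n) (s n) ⊆ closedBall (bob n) (r n)) ∧
      ∀ z, (∀ n, z ∈ closedBall (bob n) (r n)) → z ∈ S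

def AliceWins (r s : ℕ → ℝ) (x₀ : X) (S : Set X) : Prop :=
  ∃ a, IsNonanticipating a ∧ IsWinningStrategy r s x₀ S a

lemma AliceWins.mono_right {r s s' : ℕ → ℝ} {x₀ : X} {S : Set X} (h : AliceWins r s x₀ S)
    (hs : ∀ n, s' n ≤ s n) : AliceWins r s' x₀ S := by
  obtain ⟨a, ha, hwin⟩ := h
  refine ⟨a, ha, fun bob h0 hleg => ?_⟩
  obtain ⟨hA, hz⟩ := hwin bob h0 fun n => (hleg n).trans (closedBall_subset_closedBall (hs n))
  exact ⟨fun n => (closedBall_subset_closedBall (hs n)).trans (hA n), hz⟩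

/-- Bob can prolong a finite legal history forever by re-using Alice's centres. -/
lemma IsWinningStrategy.closedBall_subset {r s : ℕ → ℝ} {x₀ : X} {S : Set X}
    {a : (ℕ → X) → ℕ → X} (hwin : IsWinningStrategy r s x₀ S a) (ha : IsNonanticipating a)
    (hrs : ∀ n, r (n + 1) ≤ s n) {bob : ℕ → X} (h0 : bob 0 = x₀) {n : ℕ}
    (hleg : ∀ m < n, closedBall (bob (m + 1)) (r (m + 1)) ⊆ closedBall (a bob m) (s m)) :
    closedBall (a bob n) (s n) ⊆ closedBall (bob n) (r n) := by
  set bob' := prolong a bob n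
  have hbob : ∀ m ≤ n, bob' m = bob m := fun m hm => prolong_of_le a bob n hm
  have ha' : ∀ m ≤ n, a bob' m = a bob m := fun m hm =>
    ha _ _ _ fun i hi => hbob i (hi.trans hm)
  have hleg' : ∀ m, closedBall (bob' (m + 1)) (r (m + 1)) ⊆ closedBall (a bob' m) (s m) := by
    intro m
    rcases lt_or_ge m n with hm | hm
    · rw [hbob _ hm, ha' _ hm.le]
      exact hleg m hm
    · rw [show bob' (m + 1) = a bob' m from prolong_succ a bob n ha hm]
      exact closedBall_subset_closedBall (hrs m)
  have := (hwin bob' (by rw [hbob 0 n.zero_le, h0]) hleg').1 n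
  rwa [hbob n le_rfl, ha' n le_rfl] at this

section interleave

variable {e : ℕ × ℕ ≃ ℕ} {A : ℕ → X → (ℕ → X) → ℕ → X} {r s : ℕ → ℝ} {bob : ℕ → X}

lemma closedBall_subset_interleave_subgame (he : ∀ i, StrictMono fun j => e (i, j))
    (hleg : ∀ n, closedBall (bob (n + 1)) (r (n + 1)) ⊆ closedBall (interleave e A bob n) (s n))
    {i j : ℕ} (hAB : ∀ n, e (i, j) < n → n < e (i, j + 1) →
      closedBall (interleave e A bob n) (s n) ⊆ closedBall (bob n) (r n)) :
    closedBall (bob (e (i, j + 1))) (r (e (i, j + 1))) ⊆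
      closedBall (A i (bob (e (i, 0))) (fun j => bob (e (i, j))) j) (s (e (i, j))) := by
  rw [← interleave_apply e A bob i j]
  exact subset_of_interlaced (A := fun n => closedBall (interleave e A bob n) (s n))
    (B := fun n => closedBall (bob n) (r n)) hleg hAB (he i j.lt_succ_self)

variable {S : ℕ → Set X}

lemma interleave_closedBall_subset (he : ∀ i, StrictMono fun j => e (i, j))
    (hA : ∀ i x, IsNonanticipating (A i x))
    (hwin : ∀ i x,
      IsWinningStrategy (fun j => r (e (i, j))) (fun j => s (e (i, j))) x (S i) (A i x))
    (hr : Antitone r) (hrs : ∀ n, r (n + 1) ≤ s n)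
    (hleg : ∀ n, closedBall (bob (n + 1)) (r (n + 1)) ⊆ closedBall (interleave e A bob n) (s n))
    (n : ℕ) : closedBall (interleave e A bob n) (s n) ⊆ closedBall (bob n) (r n) := by
  induction n using Nat.strong_induction_on with
  | _ n ih =>
  obtain ⟨⟨i, k⟩, rfl⟩ := e.surjective n
  rw [interleave_apply]
  refine (hwin i _).closedBall_subset (bob := fun j => bob (e (i, j))) (hA i _)
    (fun j => ?_) rfl fun j hj => ?_
  · exact (hr (he i j.lt_succ_self).nat_succ_le).trans (hrs _)
  · exact closedBall_subset_interleave_subgame he hleg fun n _ hn =>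
      ih n (hn.trans_le ((he i).monotone hj))

lemma isWinningStrategy_interleave (he : ∀ i, StrictMono fun j => e (i, j))
    (hA : ∀ i x, IsNonanticipating (A i x))
    (hwin : ∀ i x,
      IsWinningStrategy (fun j => r (e (i, j))) (fun j => s (e (i, j))) x (S i) (A i x))
    (hr : Antitone r) (hrs : ∀ n, r (n + 1) ≤ s n) (x₀ : X) :
    IsWinningStrategy r s x₀ (⋂ i, S i) (interleave e A) := by
  intro bob _ hleg
  have hAB := interleave_closedBall_subset he hA hwin hr hrs hleg
  refine ⟨hAB, fun z hz => Set.mem_iInter.2 fun i => ?_⟩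
  have hgame := hwin i _ (fun j => bob (e (i, j))) rfl fun j =>
    closedBall_subset_interleave_subgame he hleg fun n _ _ => hAB n
  exact hgame.2 z fun j => hz _

end interleave

theorem AliceWins.iInter {e : ℕ × ℕ ≃ ℕ} (he : ∀ i, StrictMono fun j => e (i, j))
    {r s : ℕ → ℝ} (hr : Antitone r) (hrs : ∀ n, r (n + 1) ≤ s n) {S : ℕ → Set X}
    (h : ∀ i x, AliceWins (fun j => r (e (i, j))) (fun j => s (e (i, j))) x (S i)) (x₀ : X) :
    AliceWins r s x₀ (⋂ i, S i) := by
  choose A hA hwin using h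
  exact ⟨interleave e A, isNonanticipating_interleave he hA,
    isWinningStrategy_interleave he hA hwin hr hrs x₀⟩

lemma isAlphaBetaWinning_iff {α β : ℝ} {S : Set X} :
    IsAlphaBetaWinning α β S ↔ ∀ ρ, 0 < ρ → ∀ x₀ : X,
      AliceWins (fun n => ρ * (α * β) ^ n) (fun n => ρ * α * (α * β) ^ n) x₀ S :=
  Iff.rfl

lemma IsAlphaBetaWinning.aliceWins_arithmetic {α β : ℝ} {S : Set X} (hα : 0 < α) (hβ : 0 < β)
    {d : ℕ} (h : IsAlphaBetaWinning α ((α * β) ^ d / α) S) {ρ : ℝ} (hρ : 0 < ρ) (t : ℕ)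
    (x : X) :
    AliceWins (fun j => ρ * (α * β) ^ (t + j * d)) (fun j => ρ * α * (α * β) ^ (t + j * d))
      x S := by
  have hsub : α * ((α * β) ^ d / α) = (α * β) ^ d := by field_simp
  have := isAlphaBetaWinning_iff.1 h (ρ * (α * β) ^ t) (by positivity) x
  rw [hsub] at this
  convert this using 2 <;> ring

lemma IsAlphaWinning.mono {α α' : ℝ} {S : Set X} (h : IsAlphaWinning α S) (hα' : 0 < α')
    (hle : α' ≤ α) : IsAlphaWinning α' S := by
  obtain ⟨hα, hα1, hwin⟩ := h
  refine ⟨hα', hle.trans_lt hα1, fun β hβ0 hβ1 => isAlphaBetaWinning_iff.2 fun ρ hρ x => ?_⟩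
  have hsub : α * (α' * β / α) = α' * β := by field_simp
  have := isAlphaBetaWinning_iff.1
    (hwin (α' * β / α) (by positivity) (by rw [div_lt_one hα]; nlinarith)) ρ hρ x
  rw [hsub] at this
  exact this.mono_right fun n => by gcongr

theorem IsAlphaWinning.iInter {α : ℝ} {S : ℕ → Set X} (h : ∀ i, IsAlphaWinning α (S i)) :
    IsAlphaWinning α (⋂ i, S i) := by
  obtain ⟨hα0, hα1, -⟩ := h 0
  refine ⟨hα0, hα1, fun β hβ0 hβ1 => isAlphaBetaWinning_iff.2 fun ρ hρ x₀ => ?_⟩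
  have hαβ : α * β < α := mul_lt_of_lt_one_right hα0 hβ1
  have hαβ0 : 0 < α * β := by positivity
  have hαβ1 : α * β ≤ 1 := (hαβ.trans hα1).le
  have hr : Antitone fun n => ρ * (α * β) ^ n := fun m n hmn =>
    mul_le_mul_of_nonneg_left (pow_le_pow_of_le_one hαβ0.le hαβ1 hmn) hρ.le
  have hrs (n : ℕ) : ρ * (α * β) ^ (n + 1) ≤ ρ * α * (α * β) ^ n := by
    calc ρ * (α * β) ^ (n + 1) = ρ * (α * β) ^ n * α * β := by ring
      _ ≤ ρ * (α * β) ^ n * α * 1 := by gcongr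
      _ = ρ * α * (α * β) ^ n := by ring
  refine AliceWins.iInter strictMono_dyadicEquiv hr hrs (fun i x => ?_) x₀
  simp only [dyadicEquiv_apply]
  refine ((h i).2.2 _ (by positivity) ?_).aliceWins_arithmetic hα0 hβ0 hρ _ x
  rw [div_lt_one hα0]
  exact (pow_le_of_le_one hαβ0.le hαβ1 (by positivity)).trans_lt hαβ

end

theorem isAlphaWinning_iInter_general
    {X : Type*} [MetricSpace X]
    (S : ℕ → Set X) (α : ℕ → ℝ) (h : ∀ i, IsAlphaWinning (α i) (S i))
    (h₀ : 0 < ⨅ i, α i) :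
    IsAlphaWinning (⨅ i, α i) (⋂ i, S i) := by
  have hbdd : BddBelow (Set.range α) := ⟨0, by rintro _ ⟨i, rfl⟩; exact (h i).1.le⟩
  exact IsAlphaWinning.iInter fun i => (h i).mono h₀ (ciInf_le hbdd i)

/-- A countable intersection of `αᵢ`-winning sets in a complete metric space,
with `infᵢ αᵢ = α₀ > 0`, is `α₀`-winning. -/
theorem isAlphaWinning_iInter
    {X : Type*} [MetricSpace X] [CompleteSpace X]
    (S : ℕ → Set X) (α : ℕ → ℝ) (h : ∀ i, IsAlphaWinning (α i) (S i))
    (h₀ : 0 < ⨅ i, α i) :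
    IsAlphaWinning (⨅ i, α i) (⋂ i, S i) :=
  isAlphaWinning_iInter_general S α h h₀
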